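/- arXiv:0806.3998 — 2 statements merged into one kernel-verified Lean document; each statement's English description precedes it below -/
import Mathlib

section
/- Let Γ be a special torsion-free affine connection on U with parallel volume density e, and let σ be a smooth field of positive-definite symmetric contravariant 2-tensors satisfying the metrisability equation for Γ. Define Δ(x) = e(x)² · det(σ^{ab}(x)) and f = −½ log Δ. Then the connection Γ̂_a{}^b{}_c = Γ_a{}^b{}_c + (∂_a f) δ_c{}^b + δ_a{}^b (∂_c f) is the Levi-Civita connection of the Riemannian metric g on U whose inverse components are g^{ab} = Δ · σ^{ab}. In particular, Γ is projectively equivalent to a metric connection. -/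
open scoped BigOperators

/-!  Common setup: we work on open subsets `U` of `ℝⁿ` (modelled as `Fin n → ℝ`).
A torsion-free affine connection is recorded through its Christoffel symbols
`Γ x a b c = Γ_a{}^b{}_c`, symmetric in `a, c`.  `pd F a x` is the partial
derivative `∂_a F (x)`. -/

/-- Partial derivative `∂_a F` at `x`. -/
noncomputable def pd {n : ℕ} (F : (Fin n → ℝ) → ℝ) (a : Fin n) (x : Fin n → ℝ) : ℝ :=
  fderiv ℝ F x (Pi.single a 1)

/-- Kronecker delta. -/
def kron {n : ℕ} (a b : Fin n) : ℝ := if a = b then 1 else 0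

/-- Curvature tensor `ρ_{ab}{}^c{}_d` of a connection with Christoffel symbols
`Γ x a b c = Γ_a{}^b{}_c`. -/
noncomputable def curv {n : ℕ} (Γ : (Fin n → ℝ) → Fin n → Fin n → Fin n → ℝ)
    (x : Fin n → ℝ) (a b c d : Fin n) : ℝ :=
  pd (fun y => Γ y b c d) a x - pd (fun y => Γ y a c d) b x
    + ∑ e, Γ x a c e * Γ x b e d - ∑ e, Γ x b c e * Γ x a e d

/-- Ricci tensor `Ric_{ad} = ρ_{ba}{}^b{}_d`. -/
noncomputable def ricci {n : ℕ} (Γ : (Fin n → ℝ) → Fin n → Fin n → Fin n → ℝ)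
    (x : Fin n → ℝ) (a d : Fin n) : ℝ :=
  ∑ b, curv Γ x b a b d

/-- Projective Schouten tensor `P_{ab} = Ric_{ab}/(n-1)`. -/
noncomputable def projP {n : ℕ} (Γ : (Fin n → ℝ) → Fin n → Fin n → Fin n → ℝ)
    (x : Fin n → ℝ) (a b : Fin n) : ℝ :=
  ricci Γ x a b / ((n : ℝ) - 1)

/-- Projective Weyl tensor `W_{ab}{}^c{}_d = ρ_{ab}{}^c{}_d - δ_a{}^c P_{bd} + δ_b{}^c P_{ad}`. -/
noncomputable def projW {n : ℕ} (Γ : (Fin n → ℝ) → Fin n → Fin n → Fin n → ℝ)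
    (x : Fin n → ℝ) (a b c d : Fin n) : ℝ :=
  curv Γ x a b c d - kron a c * projP Γ x b d + kron b c * projP Γ x a d

/-- Covariant derivative `∇_a P_{bc}` of the projective Schouten tensor. -/
noncomputable def nablaP {n : ℕ} (Γ : (Fin n → ℝ) → Fin n → Fin n → Fin n → ℝ)
    (x : Fin n → ℝ) (a b c : Fin n) : ℝ :=
  pd (fun y => projP Γ y b c) a x - ∑ d, Γ x a d b * projP Γ x d c
    - ∑ d, Γ x a d c * projP Γ x b d

/-- Cotton–York tensor `Y_{abc} = ½(∇_a P_{bc} - ∇_b P_{ac})`. -/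
noncomputable def cottonY {n : ℕ} (Γ : (Fin n → ℝ) → Fin n → Fin n → Fin n → ℝ)
    (x : Fin n → ℝ) (a b c : Fin n) : ℝ :=
  (nablaP Γ x a b c - nablaP Γ x b a c) / 2

/-- Covariant derivative `∇_a σ^{bc}` of a contravariant symmetric 2-tensor field. -/
noncomputable def nablaSig {n : ℕ} (Γ : (Fin n → ℝ) → Fin n → Fin n → Fin n → ℝ)
    (σ : (Fin n → ℝ) → Fin n → Fin n → ℝ) (x : Fin n → ℝ) (a b c : Fin n) : ℝ :=
  pd (fun y => σ y b c) a x + ∑ d, Γ x a b d * σ x d c + ∑ d, Γ x a c d * σ x b d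

/-- Covariant derivative `∇_a μ^b` of a vector field. -/
noncomputable def nablaVec {n : ℕ} (Γ : (Fin n → ℝ) → Fin n → Fin n → Fin n → ℝ)
    (μ : (Fin n → ℝ) → Fin n → ℝ) (x : Fin n → ℝ) (a b : Fin n) : ℝ :=
  pd (fun y => μ y b) a x + ∑ c, Γ x a b c * μ x c


lemma kron_symm {n : ℕ} (a b : Fin n) : kron a b = kron b a := by
  simp [kron, eq_comm]

lemma sum_kron_mul {n : ℕ} (a : Fin n) (f : Fin n → ℝ) :
    ∑ i, kron a i * f i = f a := by
  simp [kron, ite_mul]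

lemma sum_mul_kron {n : ℕ} (a : Fin n) (f : Fin n → ℝ) :
    ∑ i, f i * kron a i = f a := by
  simp [kron, mul_ite]

lemma sum_kron_mul' {n : ℕ} (a : Fin n) (f : Fin n → ℝ) :
    ∑ i, kron i a * f i = f a := by
  simp [kron, ite_mul]

-- product splitting for updateRow along a permutation
lemma prod_updateRow_perm {n : ℕ} (A : Matrix (Fin n) (Fin n) ℝ) (r : Fin n)
    (w : Fin n → ℝ) (π : Equiv.Perm (Fin n)) :
    ∏ j, (A.updateRow r w) (π j) j
      = w (π.symm r) * ∏ j ∈ Finset.univ.erase (π.symm r), A (π j) j := by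
  rw [← Finset.mul_prod_erase Finset.univ _ (Finset.mem_univ (π.symm r))]
  congr 1
  · rw [Equiv.apply_symm_apply, Matrix.updateRow_self]
  · refine Finset.prod_congr rfl fun j hj => ?_
    have hj' : π j ≠ r := fun h => (Finset.mem_erase.mp hj).1 (by
      simpa using congrArg π.symm h)
    rw [Matrix.updateRow_ne hj']

lemma det_updateRow_eq {n : ℕ} (A : Matrix (Fin n) (Fin n) ℝ) (r : Fin n) (w : Fin n → ℝ) :
    (A.updateRow r w).det = ∑ q, w q * A.adjugate q r := by
  simp only [Matrix.adjugate_apply, Matrix.det_apply', prod_updateRow_perm, Finset.mul_sum]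
  rw [Finset.sum_comm]
  refine Finset.sum_congr rfl fun π _ => ?_
  simp only [Pi.single_apply, mul_ite, ite_mul, one_mul, zero_mul, mul_zero, mul_one]
  rw [Finset.sum_ite_eq Finset.univ (π.symm r)
    (fun x => w x * ((Equiv.Perm.sign π : ℤ) * ∏ j ∈ Finset.univ.erase ((Equiv.symm π) r), A (π j) j))]
  rw [if_pos (Finset.mem_univ _)]
  ring

lemma det_deriv_algebra {n : ℕ} (A : Matrix (Fin n) (Fin n) ℝ) (H : Fin n → Fin n → ℝ) :
    ∑ π : Equiv.Perm (Fin n), (Equiv.Perm.sign π : ℤ) *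
        ∑ i, (∏ j ∈ Finset.univ.erase i, A (π j) j) * H (π i) i
      = ∑ i, ∑ j, A.adjugate j i * H i j := by
  have step1 : ∀ π : Equiv.Perm (Fin n),
      (∑ i, (∏ j ∈ Finset.univ.erase i, A (π j) j) * H (π i) i)
        = ∑ r, (∏ j ∈ Finset.univ.erase (π.symm r), A (π j) j) * H r (π.symm r) := by
    intro π
    rw [← Equiv.sum_comp π.symm
      (fun i => (∏ j ∈ Finset.univ.erase i, A (π j) j) * H (π i) i)]
    refine Finset.sum_congr rfl fun r _ => ?_
    rw [Equiv.apply_symm_apply]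
  simp only [step1, Finset.mul_sum]
  rw [Finset.sum_comm]
  refine Finset.sum_congr rfl fun r _ => ?_
  have : ((A.updateRow r (fun q => H r q)).det) = ∑ q, H r q * A.adjugate q r :=
    det_updateRow_eq A r _
  rw [Matrix.det_apply'] at this
  simp only [prod_updateRow_perm] at this
  rw [show (∑ j, A.adjugate j r * H r j) = ∑ q, H r q * A.adjugate q r from
    Finset.sum_congr rfl fun q _ => mul_comm _ _, ← this]
  refine Finset.sum_congr rfl fun π _ => by ring

lemma hasFDerivAt_det_comp {n : ℕ} {E : Type*} [NormedAddCommGroup E] [NormedSpace ℝ E]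
    {A : E → Matrix (Fin n) (Fin n) ℝ} {A' : Fin n → Fin n → E →L[ℝ] ℝ} {x : E}
    (h : ∀ i j, HasFDerivAt (fun y => A y i j) (A' i j) x) :
    HasFDerivAt (fun y => (A y).det)
      (∑ i, ∑ j, (A x).adjugate j i • A' i j) x := by
  have key : ∀ π : Equiv.Perm (Fin n), HasFDerivAt
      (fun y => ((Equiv.Perm.sign π : ℤ) : ℝ) * ∏ i, A y (π i) i)
      (((Equiv.Perm.sign π : ℤ) : ℝ) •
        ∑ i, (∏ j ∈ Finset.univ.erase i, A x (π j) j) • A' (π i) i) x := by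
    intro π
    exact (HasFDerivAt.finset_prod (fun i _ => h (π i) i)).const_mul _
  have hsum := HasFDerivAt.fun_sum (fun π (_ : π ∈ Finset.univ) => key π)
  have hfe : (fun y => (A y).det)
      = fun y => ∑ π : Equiv.Perm (Fin n), ((Equiv.Perm.sign π : ℤ) : ℝ) * ∏ i, A y (π i) i :=
    funext fun y => Matrix.det_apply' _
  rw [hfe]
  refine hsum.congr_fderiv (Eq.symm ?_)
  ext v
  simp only [ContinuousLinearMap.sum_apply, ContinuousLinearMap.smul_apply, smul_eq_mul,
    Finset.sum_apply]
  rw [← det_deriv_algebra (A x) (fun i j => A' i j v)]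

lemma inverse_deriv_solve {n : ℕ} (m ninv dm dn : Fin n → Fin n → ℝ)
    (h2 : ∀ p e, ∑ b, ninv p b * m b e = kron p e)
    (heq : ∀ b q, ∑ e, (ninv e q * dm b e + m b e * dn e q) = 0)
    (p q : Fin n) :
    dn p q = -∑ b, ∑ c, ninv p b * dm b c * ninv c q := by
  have h3 : ∀ b q, ∑ e, m b e * dn e q = -∑ e, ninv e q * dm b e := by
    intro b q
    have h := heq b q
    rw [Finset.sum_add_distrib] at h
    linarith
  calc dn p q = ∑ e, kron p e * dn e q := (sum_kron_mul p (fun e => dn e q)).symm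
    _ = ∑ e, (∑ b, ninv p b * m b e) * dn e q := by
        refine Finset.sum_congr rfl fun e _ => ?_; rw [h2]
    _ = ∑ e, ∑ b, ninv p b * (m b e * dn e q) := by
        refine Finset.sum_congr rfl fun e _ => ?_
        rw [Finset.sum_mul]; exact Finset.sum_congr rfl fun b _ => by ring
    _ = ∑ b, ninv p b * ∑ e, m b e * dn e q := by
        rw [Finset.sum_comm]
        exact Finset.sum_congr rfl fun b _ => (Finset.mul_sum _ _ _).symm
    _ = ∑ b, ninv p b * (-∑ e, ninv e q * dm b e) := by
        refine Finset.sum_congr rfl fun b _ => ?_; rw [h3]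
    _ = -∑ b, ∑ c, ninv p b * dm b c * ninv c q := by
        rw [← Finset.sum_neg_distrib]
        refine Finset.sum_congr rfl fun b _ => ?_
        rw [mul_neg, Finset.mul_sum]
        congr 1
        exact Finset.sum_congr rfl fun c _ => by ring

noncomputable def auxPdS {n : ℕ} (G : Fin n → Fin n → Fin n → ℝ) (s : Fin n → Fin n → ℝ)
    (m : Fin n → ℝ) (a i j : Fin n) : ℝ :=
  kron a i * m j + kron a j * m i - ∑ d, G a i d * s d j - ∑ d, G a j d * s i d

noncomputable def auxPdM {n : ℕ} (G : Fin n → Fin n → Fin n → ℝ) (s t : Fin n → Fin n → ℝ)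
    (m : Fin n → ℝ) (Δ : ℝ) (a i j : Fin n) : ℝ :=
  (2 * Δ * ∑ k, t a k * m k) * s i j + Δ * auxPdS G s m a i j

noncomputable def auxPdN {n : ℕ} (G : Fin n → Fin n → Fin n → ℝ) (s t : Fin n → Fin n → ℝ)
    (m : Fin n → ℝ) (Δ : ℝ) (a p q : Fin n) : ℝ :=
  -∑ i, ∑ j, (Δ⁻¹ * t p i) * auxPdM G s t m Δ a i j * (Δ⁻¹ * t j q)

section FinalAlgebra

variable {n : ℕ} (G : Fin n → Fin n → Fin n → ℝ) (s t : Fin n → Fin n → ℝ)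
  (m : Fin n → ℝ)

lemma contractC
    (ht : ∀ a b, t a b = t b a)
    (hst : ∀ b c, ∑ d, s b d * t d c = kron b c)
    (hts : ∀ b c, ∑ d, t b d * s d c = kron b c)
    (a p q : Fin n) :
    ∑ i, ∑ j, t p i * auxPdS G s m a i j * t j q
      = t p a * (∑ k, t q k * m k) + (∑ k, t p k * m k) * t a q
        - (∑ i, t p i * G a i q) - (∑ j, t j q * G a j p) := by
  have expand : ∀ i j : Fin n, t p i * auxPdS G s m a i j * t j q
      = t p i * (kron a i * m j) * t j q + t p i * (kron a j * m i) * t j q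
        - t p i * (∑ d, G a i d * s d j) * t j q
        - t p i * (∑ d, G a j d * s i d) * t j q := by
    intro i j; rw [auxPdS]; ring
  simp_rw [expand, Finset.sum_sub_distrib, Finset.sum_add_distrib]
  have T1 : ∑ i, ∑ j, t p i * (kron a i * m j) * t j q
      = t p a * ∑ k, t q k * m k := by
    have h1 : ∀ i, ∑ j, t p i * (kron a i * m j) * t j q
        = (t p i * kron a i) * ∑ k, t q k * m k := by
      intro i
      rw [Finset.mul_sum]
      exact Finset.sum_congr rfl fun j _ => by rw [ht j q]; ring
    simp_rw [h1]
    rw [← Finset.sum_mul]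
    congr 1
    exact sum_mul_kron a (fun i => t p i)
  have T2 : ∑ i, ∑ j, t p i * (kron a j * m i) * t j q
      = (∑ k, t p k * m k) * t a q := by
    have h1 : ∀ i, ∑ j, t p i * (kron a j * m i) * t j q
        = (t p i * m i) * t a q := by
      intro i
      calc ∑ j, t p i * (kron a j * m i) * t j q
          = ∑ j, kron a j * (t p i * m i * t j q) :=
            Finset.sum_congr rfl fun j _ => by ring
        _ = t p i * m i * t a q := sum_kron_mul a _
        _ = (t p i * m i) * t a q := by ring
    simp_rw [h1]
    rw [← Finset.sum_mul]
  have T3 : ∑ i, ∑ j, t p i * (∑ d, G a i d * s d j) * t j q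
      = ∑ i, t p i * G a i q := by
    refine Finset.sum_congr rfl fun i _ => ?_
    have h1 : ∀ j, t p i * (∑ d, G a i d * s d j) * t j q
        = ∑ d, (t p i * G a i d) * (s d j * t j q) := by
      intro j
      rw [Finset.mul_sum, Finset.sum_mul]
      exact Finset.sum_congr rfl fun d _ => by ring
    simp_rw [h1]
    rw [Finset.sum_comm]
    have h2 : ∀ d, ∑ j, (t p i * G a i d) * (s d j * t j q)
        = (t p i * G a i d) * kron d q := by
      intro d; rw [← Finset.mul_sum, hst d q]
    simp_rw [h2]
    have := sum_mul_kron q (fun d => t p i * G a i d)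
    rw [show (∑ d, (t p i * G a i d) * kron d q) = ∑ d, (fun d => t p i * G a i d) d * kron q d from
      Finset.sum_congr rfl fun d _ => by rw [kron_symm], this]
  have T4 : ∑ i, ∑ j, t p i * (∑ d, G a j d * s i d) * t j q
      = ∑ j, t j q * G a j p := by
    rw [Finset.sum_comm]
    refine Finset.sum_congr rfl fun j _ => ?_
    have h1 : ∀ i, t p i * (∑ d, G a j d * s i d) * t j q
        = ∑ d, (G a j d * t j q) * (t p i * s i d) := by
      intro i
      rw [Finset.mul_sum, Finset.sum_mul]
      exact Finset.sum_congr rfl fun d _ => by ring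
    simp_rw [h1]
    rw [Finset.sum_comm]
    have h2 : ∀ d, ∑ i, (G a j d * t j q) * (t p i * s i d)
        = (G a j d * t j q) * kron p d := by
      intro d; rw [← Finset.mul_sum, hts p d]
    simp_rw [h2]
    have := sum_mul_kron p (fun d => G a j d * t j q)
    rw [show (∑ d, (G a j d * t j q) * kron p d) = ∑ d, (fun d => G a j d * t j q) d * kron p d from
      rfl, this]
    ring
  rw [T1, T2, T3, T4]

end FinalAlgebra

section FinalAlgebra2

variable {n : ℕ} (G : Fin n → Fin n → Fin n → ℝ) (s t : Fin n → Fin n → ℝ)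
  (m : Fin n → ℝ)

lemma auxPdN_eq
    (ht : ∀ a b, t a b = t b a)
    (hst : ∀ b c, ∑ d, s b d * t d c = kron b c)
    (hts : ∀ b c, ∑ d, t b d * s d c = kron b c)
    {Δ : ℝ} (hΔ : Δ ≠ 0) (a p q : Fin n) :
    auxPdN G s t m Δ a p q
      = -Δ⁻¹ * (2 * (∑ k, t a k * m k) * t p q
          + (t p a * (∑ k, t q k * m k) + (∑ k, t p k * m k) * t a q
             - (∑ i, t p i * G a i q) - (∑ j, t j q * G a j p))) := by
  rw [auxPdN]
  have expand : ∀ i j : Fin n, (Δ⁻¹ * t p i) * auxPdM G s t m Δ a i j * (Δ⁻¹ * t j q)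
      = ((Δ⁻¹ * Δ * Δ⁻¹) * (2 * (∑ k, t a k * m k))) * (t p i * s i j * t j q)
        + (Δ⁻¹ * Δ * Δ⁻¹) * (t p i * auxPdS G s m a i j * t j q) := by
    intro i j; rw [auxPdM]; ring
  simp_rw [expand, Finset.sum_add_distrib]
  have hΔ1 : Δ⁻¹ * Δ * Δ⁻¹ = Δ⁻¹ := by field_simp
  have hT : ∑ i, ∑ j, t p i * s i j * t j q = t p q := by
    rw [Finset.sum_comm]
    have h1 : ∀ j, ∑ i, t p i * s i j * t j q = kron p j * t j q := by
      intro j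
      rw [← Finset.sum_mul]
      congr 1
      exact hts p j
    simp_rw [h1]
    exact sum_kron_mul p (fun j => t j q)
  have e1 : ∑ i, ∑ j, ((Δ⁻¹ * Δ * Δ⁻¹) * (2 * (∑ k, t a k * m k))) * (t p i * s i j * t j q)
      = Δ⁻¹ * (2 * (∑ k, t a k * m k)) * t p q := by
    simp_rw [← Finset.mul_sum]
    rw [hT, hΔ1, mul_assoc]
  have e2 : ∑ i, ∑ j, (Δ⁻¹ * Δ * Δ⁻¹) * (t p i * auxPdS G s m a i j * t j q)
      = Δ⁻¹ * (t p a * (∑ k, t q k * m k) + (∑ k, t p k * m k) * t a q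
          - (∑ i, t p i * G a i q) - (∑ j, t j q * G a j p)) := by
    simp_rw [← Finset.mul_sum]
    rw [contractC G s t m ht hst hts a p q, hΔ1]
  rw [e1, e2]
  ring

lemma final_algebra
    (hG : ∀ a b c, G a b c = G c b a)
    (ht : ∀ a b, t a b = t b a)
    (hst : ∀ b c, ∑ d, s b d * t d c = kron b c)
    (hts : ∀ b c, ∑ d, t b d * s d c = kron b c)
    {Δ : ℝ} (hΔ : Δ ≠ 0) (a b c : Fin n) :
    G a b c + (-(∑ k, t a k * m k)) * kron c b + kron a b * (-(∑ k, t c k * m k))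
      = (1/2) * ∑ d, (Δ * s b d) *
          (auxPdN G s t m Δ a d c + auxPdN G s t m Δ c d a - auxPdN G s t m Δ d a c) := by
  set tm : Fin n → ℝ := fun r => ∑ k, t r k * m k with htm
  set X : Fin n → Fin n → Fin n → ℝ := fun u p q =>
    2 * tm u * t p q + (t p u * tm q + tm p * t u q
      - (∑ i, t p i * G u i q) - (∑ j, t j q * G u j p)) with hX
  have hPdN : ∀ u p q, auxPdN G s t m Δ u p q = -Δ⁻¹ * X u p q := by
    intro u p q; rw [auxPdN_eq G s t m ht hst hts hΔ u p q]
  simp_rw [hPdN]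
  have step : ∀ d, (Δ * s b d) * (-Δ⁻¹ * X a d c + -Δ⁻¹ * X c d a - -Δ⁻¹ * X d a c)
      = s b d * X d a c - s b d * X a d c - s b d * X c d a := by
    intro d
    have h1 : Δ * Δ⁻¹ = 1 := mul_inv_cancel₀ hΔ
    calc (Δ * s b d) * (-Δ⁻¹ * X a d c + -Δ⁻¹ * X c d a - -Δ⁻¹ * X d a c)
        = (Δ * Δ⁻¹) * (s b d * X d a c - s b d * X a d c - s b d * X c d a) := by ring
      _ = s b d * X d a c - s b d * X a d c - s b d * X c d a := by rw [h1]; ring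
  simp_rw [step, Finset.sum_sub_distrib]
  -- contraction facts
  have A2 : ∑ d, s b d * tm d = m b := by
    have h1 : ∀ d, s b d * tm d = ∑ k, (s b d * t d k) * m k := by
      intro d; rw [htm]; simp only []
      rw [Finset.mul_sum]
      exact Finset.sum_congr rfl fun k _ => by ring
    simp_rw [h1]
    rw [Finset.sum_comm]
    have h2 : ∀ k, ∑ d, (s b d * t d k) * m k = kron b k * m k := by
      intro k; rw [← Finset.sum_mul, hst]
    simp_rw [h2]
    exact sum_kron_mul b m
  have A3 : ∀ u v, ∑ d, s b d * (∑ i, t d i * G u i v) = G u b v := by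
    intro u v
    have h1 : ∀ d, s b d * (∑ i, t d i * G u i v) = ∑ i, (s b d * t d i) * G u i v := by
      intro d; rw [Finset.mul_sum]; exact Finset.sum_congr rfl fun i _ => by ring
    simp_rw [h1]
    rw [Finset.sum_comm]
    have h2 : ∀ i, ∑ d, (s b d * t d i) * G u i v = kron b i * G u i v := by
      intro i; rw [← Finset.sum_mul, hst]
    simp_rw [h2]
    exact sum_kron_mul b (fun i => G u i v)
  -- the two leftover double sums
  have S2 : ∑ d, s b d * X a d c
      = 2 * tm a * kron b c + kron b a * tm c + m b * t a c - G a b c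
        - ∑ d, s b d * (∑ j, t j c * G a j d) := by
    have h1 : ∀ d, s b d * X a d c
        = 2 * tm a * (s b d * t d c) + (s b d * t d a) * tm c + (s b d * tm d) * t a c
          - s b d * (∑ i, t d i * G a i c) - s b d * (∑ j, t j c * G a j d) := by
      intro d; rw [hX]; ring
    simp_rw [h1, Finset.sum_sub_distrib, Finset.sum_add_distrib]
    rw [← Finset.mul_sum, hst, ← Finset.sum_mul, hst, ← Finset.sum_mul, A2, A3]
  have S3 : ∑ d, s b d * X c d a
      = 2 * tm c * kron b a + kron b c * tm a + m b * t a c - G a b c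
        - ∑ d, s b d * (∑ j, t j a * G c j d) := by
    have h1 : ∀ d, s b d * X c d a
        = 2 * tm c * (s b d * t d a) + (s b d * t d c) * tm a + (s b d * tm d) * t c a
          - s b d * (∑ i, t d i * G c i a) - s b d * (∑ j, t j a * G c j d) := by
      intro d; rw [hX]; ring
    simp_rw [h1, Finset.sum_sub_distrib, Finset.sum_add_distrib]
    rw [← Finset.mul_sum, hst, ← Finset.sum_mul, hst, ← Finset.sum_mul, A2, A3,
      ht c a, hG c b a]
  have S1 : ∑ d, s b d * X d a c
      = 2 * (m b * t a c) + kron b a * tm c + tm a * kron b c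
        - ∑ d, s b d * (∑ j, t j a * G c j d) - ∑ d, s b d * (∑ j, t j c * G a j d) := by
    have h1 : ∀ d, s b d * X d a c
        = 2 * ((s b d * tm d) * t a c) + (s b d * t d a) * tm c + tm a * (s b d * t d c)
          - s b d * (∑ i, t a i * G d i c) - s b d * (∑ j, t j c * G d j a) := by
      intro d; simp only [hX]; rw [ht a d]; ring
    simp_rw [h1, Finset.sum_sub_distrib, Finset.sum_add_distrib]
    have h2 : ∀ d, s b d * (∑ i, t a i * G d i c) = s b d * (∑ j, t j a * G c j d) := by
      intro d; congr 1
      exact Finset.sum_congr rfl fun i _ => by rw [ht a i, hG d i c]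
    have h3 : ∀ d, s b d * (∑ j, t j c * G d j a) = s b d * (∑ j, t j c * G a j d) := by
      intro d; congr 1
      exact Finset.sum_congr rfl fun j _ => by rw [hG d j a]
    simp_rw [h2, h3]
    rw [← Finset.sum_mul, hst b a]
    have h4 : ∑ d, 2 * ((s b d * tm d) * t a c) = 2 * ((∑ d, s b d * tm d) * t a c) := by
      rw [Finset.sum_mul, Finset.mul_sum]
    rw [h4, A2]
    have h5 : ∑ d, tm a * (s b d * t d c) = tm a * kron b c := by
      rw [← Finset.mul_sum, hst]
    rw [h5]
  rw [S1, S2, S3, kron_symm c b, kron_symm b a]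
  ring
end FinalAlgebra2

lemma contractTrace {n : ℕ} (G : Fin n → Fin n → Fin n → ℝ) (s t : Fin n → Fin n → ℝ)
    (m : Fin n → ℝ)
    (ht : ∀ a b, t a b = t b a)
    (hst : ∀ b c, ∑ d, s b d * t d c = kron b c)
    (hts : ∀ b c, ∑ d, t b d * s d c = kron b c)
    (a : Fin n) :
    ∑ i, ∑ j, t j i * auxPdS G s m a i j
      = 2 * (∑ k, t a k * m k) - 2 * ∑ b, G a b b := by
  have expand : ∀ i j : Fin n, t j i * auxPdS G s m a i j
      = kron a i * (t j i * m j) + kron a j * (t j i * m i)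
        - t j i * (∑ d, G a i d * s d j) - t j i * (∑ d, G a j d * s i d) := by
    intro i j; rw [auxPdS]; ring
  simp_rw [expand, Finset.sum_sub_distrib, Finset.sum_add_distrib]
  have U1 : ∑ i, ∑ j, kron a i * (t j i * m j) = ∑ k, t a k * m k := by
    have h1 : ∀ i, ∑ j, kron a i * (t j i * m j) = kron a i * ∑ j, t j i * m j := by
      intro i; rw [Finset.mul_sum]
    simp_rw [h1]
    rw [sum_kron_mul a (fun i => ∑ j, t j i * m j)]
    exact Finset.sum_congr rfl fun j _ => by rw [ht j a]
  have U2 : ∑ i, ∑ j, kron a j * (t j i * m i) = ∑ k, t a k * m k := by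
    have h1 : ∀ i, ∑ j, kron a j * (t j i * m i) = t a i * m i :=
      fun i => sum_kron_mul a (fun j => t j i * m i)
    simp_rw [h1]
  have U3 : ∑ i, ∑ j, t j i * (∑ d, G a i d * s d j) = ∑ b, G a b b := by
    refine Finset.sum_congr rfl fun i _ => ?_
    have h1 : ∀ j, t j i * (∑ d, G a i d * s d j) = ∑ d, G a i d * (s d j * t j i) := by
      intro j; rw [Finset.mul_sum]; exact Finset.sum_congr rfl fun d _ => by ring
    simp_rw [h1]
    rw [Finset.sum_comm]
    have h2 : ∀ d, ∑ j, G a i d * (s d j * t j i) = G a i d * kron d i := by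
      intro d; rw [← Finset.mul_sum, hst]
    simp_rw [h2]
    have h3 : ∀ d, G a i d * kron d i = kron i d * G a i d := by
      intro d; rw [kron_symm]; ring
    simp_rw [h3]
    exact sum_kron_mul i (fun d => G a i d)
  have U4 : ∑ i, ∑ j, t j i * (∑ d, G a j d * s i d) = ∑ b, G a b b := by
    rw [Finset.sum_comm]
    refine Finset.sum_congr rfl fun j _ => ?_
    have h1 : ∀ i, t j i * (∑ d, G a j d * s i d) = ∑ d, G a j d * (t j i * s i d) := by
      intro i; rw [Finset.mul_sum]; exact Finset.sum_congr rfl fun d _ => by ring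
    simp_rw [h1]
    rw [Finset.sum_comm]
    have h2 : ∀ d, ∑ i, G a j d * (t j i * s i d) = G a j d * kron j d := by
      intro d; rw [← Finset.mul_sum, hts]
    simp_rw [h2]
    have h3 : ∀ d, G a j d * kron j d = kron j d * G a j d := fun d => by ring
    simp_rw [h3]
    exact sum_kron_mul j (fun d => G a j d)
  rw [U1, U2, U3, U4]
  ring

lemma pd_eq_of_hasFDerivAt {n : ℕ} {F : (Fin n → ℝ) → ℝ} {L : (Fin n → ℝ) →L[ℝ] ℝ}
    {x : Fin n → ℝ} (h : HasFDerivAt F L x) (a : Fin n) :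
    pd F a x = L (Pi.single a 1) := by
  unfold pd; rw [h.fderiv]

/-- if `Γ` is special (parallel volume density `e`) and `σ` is a
positive-definite solution of the metrisability equation, then with
`Δ = e² det σ` and `f = -½ log Δ`, the projectively changed connection
`Γ̂ = Γ + (df)δ + δ(df)` is the Levi-Civita connection of the metric whose
inverse components are `g^{ab} = Δ σ^{ab}` (so `g_{ab}` is the inverse matrix of
`Δ σ`).  In particular `Γ` is projectively equivalent to a metric connection. -/
theorem special_with_metrisability_solution_is_projectively_metric
    {n : ℕ} (hn : 2 ≤ n) (U : Set (Fin n → ℝ)) (hU : IsOpen U)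
    (Γ : (Fin n → ℝ) → Fin n → Fin n → Fin n → ℝ)
    (hΓtf : ∀ x a b c, Γ x a b c = Γ x c b a)
    (hΓsm : ∀ a b c, ContDiffOn ℝ (⊤ : ℕ∞) (fun x => Γ x a b c) U)
    (e : (Fin n → ℝ) → ℝ) (hesm : ContDiffOn ℝ (⊤ : ℕ∞) e U)
    (hepos : ∀ x ∈ U, 0 < e x)
    (hspecial : ∀ x ∈ U, ∀ a, pd e a x = (∑ b, Γ x a b b) * e x)
    (σ : (Fin n → ℝ) → Fin n → Fin n → ℝ)
    (hσsym : ∀ x b c, σ x b c = σ x c b)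
    (hσsm : ∀ b c, ContDiffOn ℝ (⊤ : ℕ∞) (fun x => σ x b c) U)
    (hσpos : ∀ x ∈ U, ∀ v : Fin n → ℝ, v ≠ 0 → 0 < ∑ a, ∑ b, σ x a b * v a * v b)
    (μ : (Fin n → ℝ) → Fin n → ℝ)
    (hμsm : ∀ a, ContDiffOn ℝ (⊤ : ℕ∞) (fun x => μ x a) U)
    (hmetr : ∀ x ∈ U, ∀ a b c,
      nablaSig Γ σ x a b c = kron a b * μ x c + kron a c * μ x b) :
    ∀ x ∈ U, ∀ a b c,
      Γ x a b c
        + pd (fun y =>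
            -(1/2) * Real.log (e y ^ 2 * (Matrix.of fun i j => σ y i j).det)) a x
          * kron c b
        + kron a b
          * pd (fun y =>
              -(1/2) * Real.log (e y ^ 2 * (Matrix.of fun i j => σ y i j).det)) c x
      = (1/2) * ∑ d,
          ((e x ^ 2 * (Matrix.of fun i j => σ x i j).det) * σ x b d) *
            (pd (fun y =>
                (Matrix.of fun i j =>
                  (e y ^ 2 * (Matrix.of fun k l => σ y k l).det) * σ y i j)⁻¹ d c) a x
              + pd (fun y =>
                  (Matrix.of fun i j =>
                    (e y ^ 2 * (Matrix.of fun k l => σ y k l).det) * σ y i j)⁻¹ d a) c x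
              - pd (fun y =>
                  (Matrix.of fun i j =>
                    (e y ^ 2 * (Matrix.of fun k l => σ y k l).det) * σ y i j)⁻¹ a c) d x) := by
  intro x hx a b c
  -- determinant nonvanishing on U
  have hdetU : ∀ y ∈ U, (Matrix.of fun i j => σ y i j).det ≠ 0 := by
    intro y hy h0
    obtain ⟨v, hv, hv0⟩ := (Matrix.exists_mulVec_eq_zero_iff).mpr h0
    have hpos := hσpos y hy v hv
    have hrow : ∀ p, (∑ q, σ y p q * v q) = 0 := by
      intro p
      have h := congrFun hv0 p
      simpa [Matrix.mulVec, dotProduct] using h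
    have hzero : ∑ p, ∑ q, σ y p q * v p * v q = 0 := by
      have h1 : ∀ p, ∑ q, σ y p q * v p * v q = v p * ∑ q, σ y p q * v q := by
        intro p
        rw [Finset.mul_sum]
        exact Finset.sum_congr rfl fun q _ => by ring
      simp_rw [h1, hrow]
      simp
    linarith
  -- basic point data
  have hdetx : (Matrix.of fun i j => σ x i j).det ≠ 0 := hdetU x hx
  have hΔx : (e x ^ 2 * (Matrix.of fun i j => σ x i j).det) ≠ 0 :=
    mul_ne_zero (pow_ne_zero 2 (ne_of_gt (hepos x hx))) hdetx
  -- symmetry of σ-matrix and its inverse at x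
  have hSXsym : Matrix.transpose (Matrix.of fun i j => σ x i j) = (Matrix.of fun i j => σ x i j) := by
    ext i j
    simp [Matrix.transpose_apply, hσsym x j i]
  have hτsym : ∀ i j, (Matrix.of fun i j => σ x i j)⁻¹ i j
      = (Matrix.of fun i j => σ x i j)⁻¹ j i := by
    intro i j
    have h : Matrix.transpose ((Matrix.of fun i j => σ x i j)⁻¹) = (Matrix.of fun i j => σ x i j)⁻¹ := by
      rw [Matrix.transpose_nonsing_inv, hSXsym]
    have h2 := congrFun (congrFun h j) i
    simpa [Matrix.transpose_apply] using h2
  -- contraction identities at x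
  have hst : ∀ p q, ∑ d, σ x p d * (Matrix.of fun i j => σ x i j)⁻¹ d q = kron p q := by
    intro p q
    have h := Matrix.mul_nonsing_inv _ (isUnit_iff_ne_zero.mpr hdetx)
    have h2 := congrFun (congrFun h p) q
    rw [Matrix.mul_apply] at h2
    simpa [Matrix.one_apply, kron] using h2
  have hts : ∀ p q, ∑ d, (Matrix.of fun i j => σ x i j)⁻¹ p d * σ x d q = kron p q := by
    intro p q
    have h := Matrix.nonsing_inv_mul _ (isUnit_iff_ne_zero.mpr hdetx)
    have h2 := congrFun (congrFun h p) q
    rw [Matrix.mul_apply] at h2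
    simpa [Matrix.one_apply, kron] using h2
  -- derivatives of the entries of σ and of e
  have hσd : ∀ i j, HasFDerivAt (fun y => σ y i j) (fderiv ℝ (fun y => σ y i j) x) x :=
    fun i j =>
      (((hσsm i j).contDiffAt (hU.mem_nhds hx)).differentiableAt (by simp)).hasFDerivAt
  have hed : HasFDerivAt e (fderiv ℝ e x) x :=
    ((hesm.contDiffAt (hU.mem_nhds hx)).differentiableAt (by simp)).hasFDerivAt
  -- value of entry derivatives from the metrisability equation
  have hpdS : ∀ a' i j, fderiv ℝ (fun y => σ y i j) x (Pi.single a' 1)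
      = auxPdS (Γ x) (fun i j => σ x i j) (μ x) a' i j := by
    intro a' i j
    have hm := hmetr x hx a' i j
    unfold nablaSig at hm
    have hpd : pd (fun y => σ y i j) a' x
        = fderiv ℝ (fun y => σ y i j) x (Pi.single a' 1) := rfl
    rw [hpd] at hm
    unfold auxPdS
    linarith
  -- determinant derivative at x
  have hdetd : HasFDerivAt (fun y => (Matrix.of fun i j => σ y i j).det)
      (∑ i, ∑ j, ((Matrix.of fun i j => σ x i j)).adjugate j i • fderiv ℝ (fun y => σ y i j) x) x :=
    hasFDerivAt_det_comp (A := fun y => Matrix.of fun i j => σ y i j) (fun i j => hσd i j)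
  have hadj : ((Matrix.of fun i j => σ x i j)).adjugate = ((Matrix.of fun i j => σ x i j)).det • ((Matrix.of fun i j => σ x i j))⁻¹ := by
    have h : ((Matrix.of fun i j => σ x i j)).det • ((Matrix.of fun i j => σ x i j))⁻¹ = ((Matrix.of fun i j => σ x i j)).adjugate := by
      rw [Matrix.inv_def, smul_smul, Ring.inverse_eq_inv', mul_inv_cancel₀ hdetx, one_smul]
    exact h.symm
  have hpdDet : ∀ a' : Fin n,
      (∑ i, ∑ j, ((Matrix.of fun i j => σ x i j)).adjugate j i • fderiv ℝ (fun y => σ y i j) x) (Pi.single a' 1)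
        = ((Matrix.of fun i j => σ x i j)).det *
          (2 * (∑ k, ((Matrix.of fun i j => σ x i j))⁻¹ a' k * μ x k) - 2 * ∑ b', Γ x a' b' b') := by
    intro a'
    simp only [ContinuousLinearMap.sum_apply, ContinuousLinearMap.smul_apply, smul_eq_mul]
    have h2 : ∀ i j : Fin n, ((Matrix.of fun i j => σ x i j)).adjugate j i * fderiv ℝ (fun y => σ y i j) x (Pi.single a' 1)
        = ((Matrix.of fun i j => σ x i j)).det * (((Matrix.of fun i j => σ x i j))⁻¹ j i * auxPdS (Γ x) (fun i j => σ x i j) (μ x) a' i j) := by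
      intro i j
      rw [hpdS a' i j, hadj]
      simp only [Matrix.smul_apply, smul_eq_mul]
      ring
    simp_rw [h2, ← Finset.mul_sum]
    congr 1
    exact contractTrace (Γ x) (fun i j => σ x i j) (fun i j => ((Matrix.of fun i j => σ x i j))⁻¹ i j) (μ x)
      hτsym hst hts a'
  -- derivative of Δ = e² det σ, with its directional values
  obtain ⟨LΔ, hΔd, hLΔval⟩ : ∃ L : (Fin n → ℝ) →L[ℝ] ℝ,
      HasFDerivAt (fun y => e y ^ 2 * (Matrix.of fun i j => σ y i j).det) L x ∧
      ∀ a', L (Pi.single a' 1)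
        = 2 * (e x ^ 2 * ((Matrix.of fun i j => σ x i j)).det) * (∑ k, ((Matrix.of fun i j => σ x i j))⁻¹ a' k * μ x k) := by
    have hepow : HasFDerivAt (fun y => e y ^ 2)
        (e x • fderiv ℝ e x + e x • fderiv ℝ e x) x := by
      have h : (fun y => e y ^ 2) = fun y => e y * e y := funext fun y => pow_two (e y)
      rw [h]
      exact hed.mul hed
    refine ⟨_, hepow.mul hdetd, ?_⟩
    intro a'
    simp only [ContinuousLinearMap.add_apply, ContinuousLinearMap.smul_apply, smul_eq_mul]
    rw [hpdDet a']
    have he : fderiv ℝ e x (Pi.single a' 1) = (∑ b', Γ x a' b' b') * e x := hspecial x hx a'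
    rw [he]
    ring
  -- value of the log-derivative (the 1-form Υ)
  have hpdlog : ∀ a', pd (fun y =>
        -(1/2) * Real.log (e y ^ 2 * (Matrix.of fun i j => σ y i j).det)) a' x
      = -(∑ k, ((Matrix.of fun i j => σ x i j))⁻¹ a' k * μ x k) := by
    intro a'
    have hlog : HasFDerivAt
        (fun y => Real.log (e y ^ 2 * (Matrix.of fun i j => σ y i j).det))
        ((e x ^ 2 * ((Matrix.of fun i j => σ x i j)).det)⁻¹ • LΔ) x := hΔd.log hΔx
    have h2 := hlog.const_mul (-(1/2) : ℝ)
    rw [pd_eq_of_hasFDerivAt h2 a']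
    simp only [ContinuousLinearMap.smul_apply, smul_eq_mul]
    rw [hLΔval a']
    field_simp
    have hex : e x ≠ 0 := (hepos x hx).ne'
    field_simp
  -- derivatives of the entries of M = Δ σ
  have hMdex : ∀ i j, ∃ L : (Fin n → ℝ) →L[ℝ] ℝ,
      HasFDerivAt (fun y => (e y ^ 2 * (Matrix.of fun k l => σ y k l).det) * σ y i j) L x ∧
      ∀ a', L (Pi.single a' 1)
        = auxPdM (Γ x) (fun i j => σ x i j) (fun i j => ((Matrix.of fun i j => σ x i j))⁻¹ i j) (μ x)
            (e x ^ 2 * ((Matrix.of fun i j => σ x i j)).det) a' i j := by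
    intro i j
    refine ⟨_, hΔd.mul (hσd i j), ?_⟩
    intro a'
    simp only [ContinuousLinearMap.add_apply, ContinuousLinearMap.smul_apply, smul_eq_mul]
    rw [hLΔval a', hpdS a' i j, auxPdM]
    ring
  choose dM hdM hdMval using hMdex
  -- nonvanishing of det M on U
  have hMdetU : ∀ y ∈ U, (((Matrix.of fun i j => (e y ^ 2 * (Matrix.of fun k l => σ y k l).det) * σ y i j) : Matrix (Fin n) (Fin n) ℝ)).det ≠ 0 := by
    intro y hy
    have hM : ((Matrix.of fun i j => (e y ^ 2 * (Matrix.of fun k l => σ y k l).det) * σ y i j) : Matrix (Fin n) (Fin n) ℝ)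
        = (e y ^ 2 * (Matrix.of fun k l => σ y k l).det) • (Matrix.of fun i j => σ y i j) := by
      ext i j
      simp [Matrix.smul_apply]
    have hΔy : (e y ^ 2 * (Matrix.of fun k l => σ y k l).det) ≠ 0 :=
      mul_ne_zero (pow_ne_zero 2 (ne_of_gt (hepos y hy))) (hdetU y hy)
    rw [hM, Matrix.det_smul]
    exact mul_ne_zero (pow_ne_zero _ hΔy) (hdetU y hy)
  -- derivative of det M
  have hMdet : HasFDerivAt (fun y => (((Matrix.of fun i j => (e y ^ 2 * (Matrix.of fun k l => σ y k l).det) * σ y i j) : Matrix (Fin n) (Fin n) ℝ)).det)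
      (∑ i, ∑ j, (((Matrix.of fun i j => (e x ^ 2 * (Matrix.of fun k l => σ x k l).det) * σ x i j) : Matrix (Fin n) (Fin n) ℝ)).adjugate j i • dM i j) x :=
    hasFDerivAt_det_comp
      (A := fun y => ((Matrix.of fun i j => (e y ^ 2 * (Matrix.of fun k l => σ y k l).det) * σ y i j) : Matrix (Fin n) (Fin n) ℝ)) (fun i j => hdM i j)
  -- differentiability of the entries of M⁻¹
  have hadjd : ∀ p q, DifferentiableAt ℝ
      (fun y => (((Matrix.of fun i j => (e y ^ 2 * (Matrix.of fun k l => σ y k l).det) * σ y i j) : Matrix (Fin n) (Fin n) ℝ)).adjugate p q) x := by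
    intro p q
    have hupd : ∀ i j, HasFDerivAt
        (fun y => ((((Matrix.of fun i j => (e y ^ 2 * (Matrix.of fun k l => σ y k l).det) * σ y i j) : Matrix (Fin n) (Fin n) ℝ)).updateRow q (Pi.single p 1)) i j)
        (if i = q then 0 else dM i j) x := by
      intro i j
      simp only [Matrix.updateRow_apply]
      rcases eq_or_ne i q with h | h
      · simp only [if_pos h]
        exact hasFDerivAt_const _ _
      · simp only [if_neg h]
        exact hdM i j
    have hdet2 := hasFDerivAt_det_comp
      (A := fun y => (((Matrix.of fun i j => (e y ^ 2 * (Matrix.of fun k l => σ y k l).det) * σ y i j) : Matrix (Fin n) (Fin n) ℝ)).updateRow q (Pi.single p 1)) hupd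
    have heq : (fun y => (((Matrix.of fun i j => (e y ^ 2 * (Matrix.of fun k l => σ y k l).det) * σ y i j) : Matrix (Fin n) (Fin n) ℝ)).adjugate p q)
        = fun y => ((((Matrix.of fun i j => (e y ^ 2 * (Matrix.of fun k l => σ y k l).det) * σ y i j) : Matrix (Fin n) (Fin n) ℝ)).updateRow q (Pi.single p 1)).det :=
      funext fun y => Matrix.adjugate_apply _ p q
    rw [heq]
    exact hdet2.differentiableAt
  have hNdiff : ∀ p q, DifferentiableAt ℝ
      (fun y => (((Matrix.of fun i j => (e y ^ 2 * (Matrix.of fun k l => σ y k l).det) * σ y i j) : Matrix (Fin n) (Fin n) ℝ))⁻¹ p q) x := by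
    intro p q
    have heq : (fun y => (((Matrix.of fun i j => (e y ^ 2 * (Matrix.of fun k l => σ y k l).det) * σ y i j) : Matrix (Fin n) (Fin n) ℝ))⁻¹ p q)
        = fun y => ((((Matrix.of fun i j => (e y ^ 2 * (Matrix.of fun k l => σ y k l).det) * σ y i j) : Matrix (Fin n) (Fin n) ℝ)).det)⁻¹ *
            (((Matrix.of fun i j => (e y ^ 2 * (Matrix.of fun k l => σ y k l).det) * σ y i j) : Matrix (Fin n) (Fin n) ℝ)).adjugate p q := by
      funext y
      rw [Matrix.inv_def, Matrix.smul_apply, Ring.inverse_eq_inv', smul_eq_mul]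
    rw [heq]
    exact ((hMdet.differentiableAt.inv (hMdetU x hx)).mul (hadjd p q))
  -- inverse of M at x
  have hMx : (((Matrix.of fun i j => (e x ^ 2 * (Matrix.of fun k l => σ x k l).det) * σ x i j) : Matrix (Fin n) (Fin n) ℝ))
      = (e x ^ 2 * ((Matrix.of fun i j => σ x i j)).det) • ((Matrix.of fun i j => σ x i j)) := by
    ext i j
    simp [Matrix.smul_apply]
  have hMinvx : (((Matrix.of fun i j => (e x ^ 2 * (Matrix.of fun k l => σ x k l).det) * σ x i j) : Matrix (Fin n) (Fin n) ℝ))⁻¹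
      = (e x ^ 2 * ((Matrix.of fun i j => σ x i j)).det)⁻¹ • ((Matrix.of fun i j => σ x i j))⁻¹ := by
    apply Matrix.inv_eq_left_inv
    rw [hMx, Matrix.smul_mul, Matrix.mul_smul, smul_smul, inv_mul_cancel₀ hΔx, one_smul,
      Matrix.nonsing_inv_mul _ (isUnit_iff_ne_zero.mpr hdetx)]
  have hMinvxe : ∀ p q, (((Matrix.of fun i j => (e x ^ 2 * (Matrix.of fun k l => σ x k l).det) * σ x i j) : Matrix (Fin n) (Fin n) ℝ))⁻¹ p q
      = (e x ^ 2 * ((Matrix.of fun i j => σ x i j)).det)⁻¹ * ((Matrix.of fun i j => σ x i j))⁻¹ p q := by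
    intro p q
    rw [hMinvx]
    simp [Matrix.smul_apply]
  -- product rule applied to M M⁻¹ = 1
  have hkey : ∀ (a' b' q : Fin n),
      ∑ e', ((((Matrix.of fun i j => (e x ^ 2 * (Matrix.of fun k l => σ x k l).det) * σ x i j) : Matrix (Fin n) (Fin n) ℝ))⁻¹ e' q * dM b' e' (Pi.single a' 1)
        + ((Matrix.of fun i j => (e x ^ 2 * (Matrix.of fun k l => σ x k l).det) * σ x i j) : Matrix (Fin n) (Fin n) ℝ) b' e' *
            fderiv ℝ (fun y => (((Matrix.of fun i j => (e y ^ 2 * (Matrix.of fun k l => σ y k l).det) * σ y i j) : Matrix (Fin n) (Fin n) ℝ))⁻¹ e' q) x (Pi.single a' 1)) = 0 := by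
    intro a' b' q
    have hprod : HasFDerivAt
        (fun y => ∑ e', ((Matrix.of fun i j => (e y ^ 2 * (Matrix.of fun k l => σ y k l).det) * σ y i j) : Matrix (Fin n) (Fin n) ℝ) b' e' *
          (((Matrix.of fun i j => (e y ^ 2 * (Matrix.of fun k l => σ y k l).det) * σ y i j) : Matrix (Fin n) (Fin n) ℝ))⁻¹ e' q)
        (∑ e', (((Matrix.of fun i j => (e x ^ 2 * (Matrix.of fun k l => σ x k l).det) * σ x i j) : Matrix (Fin n) (Fin n) ℝ) b' e' •
            fderiv ℝ (fun y => (((Matrix.of fun i j => (e y ^ 2 * (Matrix.of fun k l => σ y k l).det) * σ y i j) : Matrix (Fin n) (Fin n) ℝ))⁻¹ e' q) x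
          + (((Matrix.of fun i j => (e x ^ 2 * (Matrix.of fun k l => σ x k l).det) * σ x i j) : Matrix (Fin n) (Fin n) ℝ))⁻¹ e' q • dM b' e')) x := by
      apply HasFDerivAt.fun_sum
      intro e' _
      exact (hdM b' e').mul ((hNdiff e' q).hasFDerivAt)
    have heq : (fun y => ∑ e', ((Matrix.of fun i j => (e y ^ 2 * (Matrix.of fun k l => σ y k l).det) * σ y i j) : Matrix (Fin n) (Fin n) ℝ) b' e' *
        (((Matrix.of fun i j => (e y ^ 2 * (Matrix.of fun k l => σ y k l).det) * σ y i j) : Matrix (Fin n) (Fin n) ℝ))⁻¹ e' q) =ᶠ[nhds x] fun _ => kron b' q := by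
      filter_upwards [hU.mem_nhds hx] with y hy
      have hmul := Matrix.mul_nonsing_inv
        (((Matrix.of fun i j => (e y ^ 2 * (Matrix.of fun k l => σ y k l).det) * σ y i j) : Matrix (Fin n) (Fin n) ℝ)) (isUnit_iff_ne_zero.mpr (hMdetU y hy))
      have h2 := congrFun (congrFun hmul b') q
      rw [Matrix.mul_apply] at h2
      rw [h2]
      simp [Matrix.one_apply, kron]
    have h0 : HasFDerivAt (fun y => ∑ e', ((Matrix.of fun i j => (e y ^ 2 * (Matrix.of fun k l => σ y k l).det) * σ y i j) : Matrix (Fin n) (Fin n) ℝ) b' e' *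
        (((Matrix.of fun i j => (e y ^ 2 * (Matrix.of fun k l => σ y k l).det) * σ y i j) : Matrix (Fin n) (Fin n) ℝ))⁻¹ e' q) 0 x :=
      (hasFDerivAt_const (𝕜 := ℝ) (kron b' q) x).congr_of_eventuallyEq heq
    have huniq := hprod.unique h0
    have hev := congrArg (fun L : (Fin n → ℝ) →L[ℝ] ℝ => L (Pi.single a' 1)) huniq
    simp only [ContinuousLinearMap.sum_apply, ContinuousLinearMap.add_apply,
      ContinuousLinearMap.smul_apply, smul_eq_mul, ContinuousLinearMap.zero_apply] at hev
    rw [← hev]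
    exact Finset.sum_congr rfl fun e' _ => by ring
  -- solve for the derivative of M⁻¹
  have hsolve : ∀ (a' p q : Fin n),
      fderiv ℝ (fun y => (((Matrix.of fun i j => (e y ^ 2 * (Matrix.of fun k l => σ y k l).det) * σ y i j) : Matrix (Fin n) (Fin n) ℝ))⁻¹ p q) x (Pi.single a' 1)
        = -∑ b', ∑ c', (((Matrix.of fun i j => (e x ^ 2 * (Matrix.of fun k l => σ x k l).det) * σ x i j) : Matrix (Fin n) (Fin n) ℝ))⁻¹ p b' *
            dM b' c' (Pi.single a' 1) * (((Matrix.of fun i j => (e x ^ 2 * (Matrix.of fun k l => σ x k l).det) * σ x i j) : Matrix (Fin n) (Fin n) ℝ))⁻¹ c' q := by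
    intro a' p q
    refine inverse_deriv_solve (fun i j => ((Matrix.of fun i j => (e x ^ 2 * (Matrix.of fun k l => σ x k l).det) * σ x i j) : Matrix (Fin n) (Fin n) ℝ) i j)
      (fun i j => (((Matrix.of fun i j => (e x ^ 2 * (Matrix.of fun k l => σ x k l).det) * σ x i j) : Matrix (Fin n) (Fin n) ℝ))⁻¹ i j)
      (fun i j => dM i j (Pi.single a' 1))
      (fun i j => fderiv ℝ (fun y => (((Matrix.of fun i j => (e y ^ 2 * (Matrix.of fun k l => σ y k l).det) * σ y i j) : Matrix (Fin n) (Fin n) ℝ))⁻¹ i j) x (Pi.single a' 1))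
      ?_ (fun b' q' => hkey a' b' q') p q
    intro p' e'
    have hmul := Matrix.nonsing_inv_mul
      (((Matrix.of fun i j => (e x ^ 2 * (Matrix.of fun k l => σ x k l).det) * σ x i j) : Matrix (Fin n) (Fin n) ℝ)) (isUnit_iff_ne_zero.mpr (hMdetU x hx))
    have h2 := congrFun (congrFun hmul p') e'
    rw [Matrix.mul_apply] at h2
    rw [h2]
    simp [Matrix.one_apply, kron]
  -- the pd-values of the entries of M⁻¹
  have hpdN : ∀ (a' p q : Fin n),
      pd (fun y => (((Matrix.of fun i j => (e y ^ 2 * (Matrix.of fun k l => σ y k l).det) * σ y i j) : Matrix (Fin n) (Fin n) ℝ))⁻¹ p q) a' x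
        = auxPdN (Γ x) (fun i j => σ x i j) (fun i j => ((Matrix.of fun i j => σ x i j))⁻¹ i j) (μ x)
            (e x ^ 2 * ((Matrix.of fun i j => σ x i j)).det) a' p q := by
    intro a' p q
    have h1 : pd (fun y => (((Matrix.of fun i j => (e y ^ 2 * (Matrix.of fun k l => σ y k l).det) * σ y i j) : Matrix (Fin n) (Fin n) ℝ))⁻¹ p q) a' x
        = fderiv ℝ (fun y => (((Matrix.of fun i j => (e y ^ 2 * (Matrix.of fun k l => σ y k l).det) * σ y i j) : Matrix (Fin n) (Fin n) ℝ))⁻¹ p q) x (Pi.single a' 1) := rfl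
    rw [h1, hsolve a' p q, auxPdN]
    apply congrArg Neg.neg
    refine Finset.sum_congr rfl fun b' _ => Finset.sum_congr rfl fun c' _ => ?_
    rw [hMinvxe p b', hMinvxe c' q, hdMval b' c' a']
  -- assemble
  rw [hpdlog a, hpdlog c]
  simp_rw [hpdN]
  exact final_algebra (Γ x) (fun i j => σ x i j) (fun i j => ((Matrix.of fun i j => σ x i j))⁻¹ i j) (μ x)
    (fun p q r => hΓtf x p q r) hτsym hst hts hΔx a b c
end

section
/- Let g be a smooth Riemannian metric on U with Levi-Civita connection D, let f be a smooth function on U, and let Γ be the torsion-free connection projectively equivalent to D via Υ_a = ∂_a f, i.e. Γ_a{}^b{}_c = D_a{}^b{}_c + Υ_a δ_c{}^b + δ_a{}^b Υ_c. Then σ^{bc} = e^{−2f} g^{bc} is a positive-definite solution of the metrisability equation for Γ, with vector field μ^a = e^{−2f} Υ_b g^{ab}. -/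
open scoped BigOperators

open scoped Matrix

lemma pd_congr_nhds {n : ℕ} {F G : (Fin n → ℝ) → ℝ} {x : Fin n → ℝ}
    (h : F =ᶠ[nhds x] G) (a : Fin n) : pd F a x = pd G a x := by
  unfold pd; rw [Filter.EventuallyEq.fderiv_eq h]

lemma pd_const {n : ℕ} (c : ℝ) (a : Fin n) (x : Fin n → ℝ) :
    pd (fun _ => c) a x = 0 := by
  unfold pd; rw [fderiv_const_apply]; simp

lemma pd_mul {n : ℕ} {F G : (Fin n → ℝ) → ℝ} {x : Fin n → ℝ}
    (hF : DifferentiableAt ℝ F x) (hG : DifferentiableAt ℝ G x) (a : Fin n) :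
    pd (fun y => F y * G y) a x = pd F a x * G x + F x * pd G a x := by
  unfold pd; rw [fderiv_fun_mul hF hG]; simp; ring

lemma pd_sum {n : ℕ} {ι : Type*} (s : Finset ι) {F : ι → (Fin n → ℝ) → ℝ} {x : Fin n → ℝ}
    (hF : ∀ i ∈ s, DifferentiableAt ℝ (F i) x) (a : Fin n) :
    pd (fun y => ∑ i ∈ s, F i y) a x = ∑ i ∈ s, pd (F i) a x := by
  unfold pd
  rw [fderiv_fun_sum hF]
  simp

lemma pd_exp_comp {n : ℕ} {f : (Fin n → ℝ) → ℝ} {x : Fin n → ℝ}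
    (hf : DifferentiableAt ℝ f x) (a : Fin n) :
    pd (fun y => Real.exp (-2 * f y)) a x = Real.exp (-2 * f x) * (-2 * pd f a x) := by
  unfold pd
  have h2 : DifferentiableAt ℝ (fun y => -2 * f y) x := hf.const_mul _
  rw [fderiv_exp h2, fderiv_const_mul hf]
  simp [mul_comm, mul_assoc]

lemma contDiffOn_finset_prod {n : ℕ} {ι : Type*} (s : Finset ι)
    {f : ι → (Fin n → ℝ) → ℝ} {U : Set (Fin n → ℝ)}
    (h : ∀ i ∈ s, ContDiffOn ℝ (⊤ : ℕ∞) (f i) U) :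
    ContDiffOn ℝ (⊤ : ℕ∞) (fun x => ∏ i ∈ s, f i x) U := by
  classical
  induction s using Finset.induction_on with
  | empty => simpa using contDiffOn_const
  | insert a s' hni ih =>
    simp only [Finset.prod_insert hni]
    exact (h a (Finset.mem_insert_self a s')).mul
      (ih fun i hi => h i (Finset.mem_insert_of_mem hi))

lemma contDiffOn_det' {n : ℕ} {M : (Fin n → ℝ) → Matrix (Fin n) (Fin n) ℝ}
    {U : Set (Fin n → ℝ)} (h : ∀ i j, ContDiffOn ℝ (⊤ : ℕ∞) (fun x => M x i j) U) :
    ContDiffOn ℝ (⊤ : ℕ∞) (fun x => (M x).det) U := by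
  classical
  have : (fun x => (M x).det)
      = fun x => ∑ σ : Equiv.Perm (Fin n), (Equiv.Perm.sign σ : ℝ) * ∏ i, M x (σ i) i := by
    funext x
    rw [Matrix.det_apply]
    simp [Units.smul_def, zsmul_eq_mul]
  rw [this]
  apply ContDiffOn.sum
  intro σ _
  exact ContDiffOn.mul contDiffOn_const
    (contDiffOn_finset_prod Finset.univ (fun i _ => h (σ i) i))

lemma sum_antisym {n : ℕ} (F : Fin n → Fin n → ℝ) (h : ∀ d e, F d e + F e d = 0) :
    ∑ d, ∑ e, F d e = 0 := by
  have h1 : (∑ d, ∑ e, F d e) + (∑ d, ∑ e, F d e) = 0 := by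
    conv_lhs => rw [show (∑ d, ∑ e, F d e) + (∑ d, ∑ e, F d e)
      = (∑ d, ∑ e, F d e) + (∑ d, ∑ e, F e d) by rw [Finset.sum_comm]]
    rw [← Finset.sum_add_distrib]
    simp only [← Finset.sum_add_distrib, h]
    simp
  linarith

lemma F_cancel {n : ℕ} (H : Fin n → Fin n → ℝ) (Dg : Fin n → Fin n → Fin n → ℝ)
    (hH : ∀ i j, H i j = H j i) (hDg : ∀ i j k, Dg i j k = Dg i k j) (a b c : Fin n) :
    ∀ d e,
      (1/2 * (H b e * H d c) * (Dg a e d + Dg d e a - Dg e a d)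
        + 1/2 * (H c e * H b d) * (Dg a e d + Dg d e a - Dg e a d)
        - H b e * Dg a e d * H d c)
      + (1/2 * (H b d * H e c) * (Dg a d e + Dg e d a - Dg d a e)
        + 1/2 * (H c d * H b e) * (Dg a d e + Dg e d a - Dg d a e)
        - H b d * Dg a d e * H e c) = 0 := by
  intro d e
  rw [hH e c, hH c d, hDg a d e, hDg e d a, hDg d a e]
  ring


/-- conversely, if `D` is the Levi-Civita connection of a metric
`g` and `Γ = D + (df)δ + δ(df)`, then `σ^{bc} = e^{-2f} g^{bc}` is a
positive-definite solution of the metrisability equation for `Γ`, with vector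
field `μ^a = e^{-2f} Υ_b g^{ab}` where `Υ = df`. -/
theorem metric_gives_metrisability_solution
    {n : ℕ} (hn : 2 ≤ n) (U : Set (Fin n → ℝ)) (hU : IsOpen U)
    (g ginv : (Fin n → ℝ) → Fin n → Fin n → ℝ)
    (hgsym : ∀ x a b, g x a b = g x b a)
    (hgsm : ∀ a b, ContDiffOn ℝ (⊤ : ℕ∞) (fun x => g x a b) U)
    (hgpos : ∀ x ∈ U, ∀ v : Fin n → ℝ, v ≠ 0 → 0 < ∑ a, ∑ b, g x a b * v a * v b)
    (hginv : ∀ x ∈ U, ∀ a b, (∑ d, g x a d * ginv x d b) = kron a b)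
    (D : (Fin n → ℝ) → Fin n → Fin n → Fin n → ℝ)
    (hD : ∀ x ∈ U, ∀ a b c,
      D x a b c = (1/2) * ∑ d, ginv x b d *
        (pd (fun y => g y d c) a x + pd (fun y => g y d a) c x
          - pd (fun y => g y a c) d x))
    (f : (Fin n → ℝ) → ℝ) (hf : ContDiffOn ℝ (⊤ : ℕ∞) f U)
    (Γ : (Fin n → ℝ) → Fin n → Fin n → Fin n → ℝ)
    (hproj : ∀ x a b c,
      Γ x a b c = D x a b c + pd f a x * kron c b + kron a b * pd f c x) :
    (∀ x ∈ U, ∀ a b c,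
      nablaSig Γ (fun y b' c' => Real.exp (-2 * f y) * ginv y b' c') x a b c
        = kron a b * (Real.exp (-2 * f x) * ∑ d, pd f d x * ginv x c d)
          + kron a c * (Real.exp (-2 * f x) * ∑ d, pd f d x * ginv x b d))
    ∧
    (∀ x ∈ U, ∀ v : Fin n → ℝ, v ≠ 0 →
      0 < ∑ a, ∑ b, (Real.exp (-2 * f x) * ginv x a b) * v a * v b) := by
  classical
  -- matrix identities
  have hmul : ∀ x ∈ U, Matrix.of (g x) * Matrix.of (ginv x) = 1 := by
    intro x hx
    ext a b
    rw [Matrix.mul_apply, Matrix.one_apply]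
    simpa [kron] using hginv x hx a b
  have hinveq : ∀ x ∈ U, (Matrix.of (g x))⁻¹ = Matrix.of (ginv x) :=
    fun x hx => Matrix.inv_eq_right_inv (hmul x hx)
  have hmul' : ∀ x ∈ U, Matrix.of (ginv x) * Matrix.of (g x) = 1 :=
    fun x hx => mul_eq_one_comm.mp (hmul x hx)
  have hLeft : ∀ x ∈ U, ∀ a b, ∑ d, ginv x a d * g x d b = kron a b := by
    intro x hx a b
    have := congrFun (congrFun (hmul' x hx) a) b
    rw [Matrix.mul_apply, Matrix.one_apply] at this
    simpa [kron] using this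
  have hgT : ∀ x ∈ U, (Matrix.of (g x))ᵀ = Matrix.of (g x) := by
    intro x hx; ext a b; exact hgsym x b a
  have hHsym : ∀ x ∈ U, ∀ i j, ginv x i j = ginv x j i := by
    intro x hx i j
    have h3 : ((Matrix.of (g x))⁻¹)ᵀ = (Matrix.of (g x))⁻¹ := by
      rw [Matrix.transpose_nonsing_inv, hgT x hx]
    rw [hinveq x hx] at h3
    have := congrFun (congrFun h3 j) i
    simpa using this
  -- smoothness of ginv
  have hginvCD : ∀ (i j : Fin n), ∀ x ∈ U, ContDiffAt ℝ (⊤ : ℕ∞) (fun y => ginv y i j) x := by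
    have hdet : ∀ x ∈ U, (Matrix.of (g x)).det ≠ 0 := by
      intro x hx
      have := congrArg Matrix.det (hmul x hx)
      rw [Matrix.det_mul, Matrix.det_one] at this
      exact left_ne_zero_of_mul_eq_one this
    have hginveq : ∀ x ∈ U, ∀ a b,
        ginv x a b = ((Matrix.of (g x)).det)⁻¹ * (Matrix.of (g x)).adjugate a b := by
      intro x hx a b
      have h2 : (Matrix.of (g x))⁻¹ a b
          = ((Matrix.of (g x)).det)⁻¹ * (Matrix.of (g x)).adjugate a b := by
        rw [Matrix.inv_def]
        simp [Ring.inverse_eq_inv', Matrix.smul_apply, smul_eq_mul]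
      rw [← h2, hinveq x hx]; rfl
    have hdetsm : ContDiffOn ℝ (⊤ : ℕ∞) (fun x => (Matrix.of (g x)).det) U :=
      contDiffOn_det' (fun i j => hgsm i j)
    have hadjsm : ∀ a b, ContDiffOn ℝ (⊤ : ℕ∞) (fun x => (Matrix.of (g x)).adjugate a b) U := by
      intro a b
      have : (fun x => (Matrix.of (g x)).adjugate a b)
          = fun x => ((Matrix.of (g x)).updateRow b (Pi.single a 1)).det := by
        funext x; rw [Matrix.adjugate_apply]
      rw [this]
      apply contDiffOn_det'
      intro i j
      by_cases hib : i = b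
      · subst hib
        simp only [Matrix.updateRow_self]
        exact contDiffOn_const
      · simp only [Matrix.updateRow_ne hib]
        exact hgsm i j
    intro a b x hx
    have hsm : ContDiffOn ℝ (⊤ : ℕ∞)
        (fun x => ((Matrix.of (g x)).det)⁻¹ * (Matrix.of (g x)).adjugate a b) U :=
      (hdetsm.inv hdet).mul (hadjsm a b)
    apply (hsm.contDiffAt (hU.mem_nhds hx)).congr_of_eventuallyEq
    filter_upwards [hU.mem_nhds hx] with y hy
    exact hginveq y hy a b
  have hginvD : ∀ x ∈ U, ∀ i j, DifferentiableAt ℝ (fun y => ginv y i j) x :=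
    fun x hx i j => (hginvCD i j x hx).differentiableAt (by simp)
  have hgD : ∀ x ∈ U, ∀ i j, DifferentiableAt ℝ (fun y => g y i j) x :=
    fun x hx i j => ((hgsm i j).contDiffAt (hU.mem_nhds hx)).differentiableAt (by simp)
  have hfD : ∀ x ∈ U, DifferentiableAt ℝ f x :=
    fun x hx => (hf.contDiffAt (hU.mem_nhds hx)).differentiableAt (by simp)
  have hDgsym : ∀ x, ∀ i j k : Fin n,
      pd (fun y => g y j k) i x = pd (fun y => g y k j) i x := by
    intro x i j k
    congr 1
    funext y
    exact hgsym y j k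
  -- derivative of the inverse metric
  have hL0 : ∀ x ∈ U, ∀ a b c, pd (fun y => ginv y b c) a x
      = ∑ e, ∑ d, (-(ginv x b e * (pd (fun y => g y e d) a x * ginv x d c))) := by
    intro x hx a b c
    have hkey : ∀ e c', ∑ d, g x e d * pd (fun y => ginv y d c') a x
        = -∑ d, pd (fun y => g y e d) a x * ginv x d c' := by
      intro e c'
      have h0 : pd (fun y => ∑ d, g y e d * ginv y d c') a x = 0 := by
        rw [pd_congr_nhds (show (fun y => ∑ d, g y e d * ginv y d c')
            =ᶠ[nhds x] fun _ => kron e c' by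
          filter_upwards [hU.mem_nhds hx] with y hy
          exact hginv y hy e c') a, pd_const]
      rw [pd_sum (F := fun d y => g y e d * ginv y d c') Finset.univ
        (fun d _ => (hgD x hx e d).mul (hginvD x hx d c')) a] at h0
      have h1 : ∑ d, (pd (fun y => g y e d) a x * ginv x d c'
          + g x e d * pd (fun y => ginv y d c') a x) = 0 := by
        rw [← h0]
        exact Finset.sum_congr rfl
          fun d _ => (pd_mul (hgD x hx e d) (hginvD x hx d c') a).symm
      rw [Finset.sum_add_distrib] at h1
      linarith
    calc pd (fun y => ginv y b c) a x
        = ∑ e, kron b e * pd (fun y => ginv y e c) a x := by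
          simp [kron, ite_mul, Finset.sum_ite_eq, Finset.mem_univ]
      _ = ∑ e, (∑ m, ginv x b m * g x m e) * pd (fun y => ginv y e c) a x := by
          refine Finset.sum_congr rfl fun e _ => ?_
          rw [hLeft x hx b e]
      _ = ∑ e, ∑ m, ginv x b m * g x m e * pd (fun y => ginv y e c) a x := by
          refine Finset.sum_congr rfl fun e _ => ?_
          rw [Finset.sum_mul]
      _ = ∑ m, ∑ e, ginv x b m * g x m e * pd (fun y => ginv y e c) a x :=
          Finset.sum_comm
      _ = ∑ m, ginv x b m * ∑ e, g x m e * pd (fun y => ginv y e c) a x := by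
          refine Finset.sum_congr rfl fun m _ => ?_
          rw [Finset.mul_sum]
          exact Finset.sum_congr rfl fun e _ => by ring
      _ = ∑ m, ginv x b m * -∑ e, pd (fun y => g y m e) a x * ginv x e c := by
          refine Finset.sum_congr rfl fun m _ => ?_
          rw [hkey m c]
      _ = ∑ e, ∑ d, (-(ginv x b e * (pd (fun y => g y e d) a x * ginv x d c))) := by
          refine Finset.sum_congr rfl fun m _ => ?_
          rw [mul_neg, Finset.mul_sum, ← Finset.sum_neg_distrib]
  -- Levi-Civita compatibility with the inverse metric
  have hL1 : ∀ x ∈ U, ∀ a b c, pd (fun y => ginv y b c) a x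
      + (∑ d, D x a b d * ginv x d c) + (∑ d, D x a c d * ginv x b d) = 0 := by
    intro x hx a b c
    have e2 : ∑ d, D x a b d * ginv x d c
        = ∑ d, ∑ e, 1/2 * (ginv x b e * ginv x d c)
            * (pd (fun y => g y e d) a x + pd (fun y => g y e a) d x
              - pd (fun y => g y a d) e x) := by
      refine Finset.sum_congr rfl fun d _ => ?_
      rw [hD x hx a b d, Finset.mul_sum, Finset.sum_mul]
      exact Finset.sum_congr rfl fun e _ => by ring
    have e3 : ∑ d, D x a c d * ginv x b d
        = ∑ d, ∑ e, 1/2 * (ginv x c e * ginv x b d)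
            * (pd (fun y => g y e d) a x + pd (fun y => g y e a) d x
              - pd (fun y => g y a d) e x) := by
      refine Finset.sum_congr rfl fun d _ => ?_
      rw [hD x hx a c d, Finset.mul_sum, Finset.sum_mul]
      exact Finset.sum_congr rfl fun e _ => by ring
    rw [hL0 x hx a b c, e2, e3, Finset.sum_comm
      (f := fun e d => (-(ginv x b e * (pd (fun y => g y e d) a x * ginv x d c))))]
    rw [← Finset.sum_add_distrib, ← Finset.sum_add_distrib]
    simp only [← Finset.sum_add_distrib]
    have := sum_antisym (n := n)
      (fun d e => 1/2 * (ginv x b e * ginv x d c)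
            * (pd (fun y => g y e d) a x + pd (fun y => g y e a) d x
              - pd (fun y => g y a d) e x)
        + 1/2 * (ginv x c e * ginv x b d)
            * (pd (fun y => g y e d) a x + pd (fun y => g y e a) d x
              - pd (fun y => g y a d) e x)
        - ginv x b e * pd (fun y => g y e d) a x * ginv x d c)
      (F_cancel (fun i j => ginv x i j) (fun i j k => pd (fun y => g y j k) i x)
        (hHsym x hx) (fun i j k => hDgsym x i j k) a b c)
    rw [← this]
    refine Finset.sum_congr rfl fun d _ => Finset.sum_congr rfl fun e _ => by ring
  constructor
  · -- metrisability equation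
    intro x hx a b c
    have hexpD : DifferentiableAt ℝ (fun y => Real.exp (-2 * f y)) x :=
      ((hfD x hx).const_mul (-2)).exp
    unfold nablaSig
    rw [pd_mul hexpD (hginvD x hx b c) a, pd_exp_comp (hfD x hx) a]
    have e1 : ∑ d, Γ x a b d * (Real.exp (-2 * f x) * ginv x d c)
        = (∑ d, D x a b d * ginv x d c) * Real.exp (-2 * f x)
          + pd f a x * (Real.exp (-2 * f x) * ginv x b c)
          + kron a b * (∑ d, pd f d x * ginv x d c) * Real.exp (-2 * f x) := by
      rw [show ∑ d, Γ x a b d * (Real.exp (-2 * f x) * ginv x d c)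
          = ∑ d, (D x a b d * ginv x d c * Real.exp (-2 * f x)
            + pd f a x * (kron d b * (Real.exp (-2 * f x) * ginv x d c))
            + kron a b * (pd f d x * ginv x d c) * Real.exp (-2 * f x))
        from Finset.sum_congr rfl fun d _ => by rw [hproj x a b d]; ring]
      rw [Finset.sum_add_distrib, Finset.sum_add_distrib]
      congr 1
      · congr 1
        · rw [Finset.sum_mul]
        · rw [← Finset.mul_sum]
          congr 1
          simp [kron, ite_mul, Finset.sum_ite_eq', Finset.mem_univ]
      · rw [← Finset.sum_mul, ← Finset.mul_sum]
    have e1' : ∑ d, Γ x a c d * (Real.exp (-2 * f x) * ginv x b d)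
        = (∑ d, D x a c d * ginv x b d) * Real.exp (-2 * f x)
          + pd f a x * (Real.exp (-2 * f x) * ginv x b c)
          + kron a c * (∑ d, pd f d x * ginv x b d) * Real.exp (-2 * f x) := by
      rw [show ∑ d, Γ x a c d * (Real.exp (-2 * f x) * ginv x b d)
          = ∑ d, (D x a c d * ginv x b d * Real.exp (-2 * f x)
            + pd f a x * (kron d c * (Real.exp (-2 * f x) * ginv x b d))
            + kron a c * (pd f d x * ginv x b d) * Real.exp (-2 * f x))
        from Finset.sum_congr rfl fun d _ => by rw [hproj x a c d]; ring]
      rw [Finset.sum_add_distrib, Finset.sum_add_distrib]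
      congr 1
      · congr 1
        · rw [Finset.sum_mul]
        · rw [← Finset.mul_sum]
          congr 1
          simp [kron, ite_mul, Finset.sum_ite_eq', Finset.mem_univ]
      · rw [← Finset.sum_mul, ← Finset.mul_sum]
    rw [e1, e1']
    have hpdH : pd (fun y => ginv y b c) a x
        = -(∑ d, D x a b d * ginv x d c) - (∑ d, D x a c d * ginv x b d) := by
      have := hL1 x hx a b c
      linarith
    rw [hpdH]
    have hT1 : (∑ d, pd f d x * ginv x d c) = ∑ d, pd f d x * ginv x c d :=
      Finset.sum_congr rfl fun d _ => by rw [hHsym x hx d c]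
    rw [hT1]
    ring
  · -- positivity
    intro x hx v hv
    have hpos : Matrix.PosDef (Matrix.of (g x)) := by
      rw [Matrix.posDef_iff_dotProduct_mulVec]
      refine ⟨?_, ?_⟩
      · ext i j
        simp only [Matrix.conjTranspose_apply, Matrix.of_apply, star_trivial]
        exact hgsym x j i
      · intro w hw
        have := hgpos x hx w hw
        simpa [dotProduct, Matrix.mulVec, Finset.mul_sum, mul_comm, mul_assoc,
          mul_left_comm] using this
    have hip : Matrix.PosDef (Matrix.of (ginv x)) := by
      rw [← hinveq x hx]; exact hpos.inv
    have h2 : 0 < ∑ a, ∑ b, ginv x a b * v a * v b := by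
      have := (Matrix.posDef_iff_dotProduct_mulVec.mp hip).2 hv
      simpa [dotProduct, Matrix.mulVec, Finset.mul_sum, mul_comm, mul_assoc,
        mul_left_comm] using this
    have h3 : ∑ a, ∑ b, (Real.exp (-2 * f x) * ginv x a b) * v a * v b
        = Real.exp (-2 * f x) * ∑ a, ∑ b, ginv x a b * v a * v b := by
      rw [Finset.mul_sum]
      refine Finset.sum_congr rfl fun a _ => ?_
      rw [Finset.mul_sum]
      exact Finset.sum_congr rfl fun b _ => by ring
    rw [h3]
    exact mul_pos (Real.exp_pos _) h2
end
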